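/- (Crystallographic condition, necessity.) Let O be a principal ideal domain with fraction field K, and let B be a symmetric bilinear form on K^{n+1} whose Gram matrix with respect to the standard basis has entries in O. Let e ∈ O^{n+1} be a vector whose coordinates generate the unit ideal of O (coprime coordinates), with s = B(e,e) ≠ 0. If the reflection R_e(x) = x − (2B(e,x)/s)·e maps O^{n+1} into itself, then (2/s)·B(e, v_i) ∈ O for every standard basis vector v_i (i = 0, …, n). -/
import Mathlib


/-- Crystallographic condition, necessity: let `O` be a PID with fraction field `K`,
`B` a symmetric bilinear form on `K^{n+1}` with Gram entries in `O`, and `e ∈ O^{n+1}`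
with coprime coordinates and `s = B(e,e) ≠ 0`. If the reflection
`R_e(x) = x - (2B(e,x)/s)·e` maps `O^{n+1}` into itself, then `(2/s)·B(e,v_i) ∈ O` for
every standard basis vector `v_i`. -/
theorem stmt7 {O K : Type*} [CommRing O] [IsDomain O] [IsPrincipalIdealRing O]
    [Field K] [Algebra O K] [IsFractionRing O K] (n : ℕ)
    (B : (Fin (n + 1) → K) →ₗ[K] (Fin (n + 1) → K) →ₗ[K] K)
    (hsymm : ∀ x y : Fin (n + 1) → K, B x y = B y x)
    (hgram : ∀ i j : Fin (n + 1),
      B (Pi.single i 1) (Pi.single j 1) ∈ (algebraMap O K).range)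
    (e : Fin (n + 1) → O) (hcop : Ideal.span (Set.range e) = ⊤)
    (e' : Fin (n + 1) → K) (he' : e' = fun i => algebraMap O K (e i))
    (s : K) (hs : s = B e' e') (hs0 : s ≠ 0)
    (hmap : ∀ x : Fin (n + 1) → K, (∀ i, x i ∈ (algebraMap O K).range) →
      ∀ i, (x - (2 * B e' x / s) • e') i ∈ (algebraMap O K).range) :
    ∀ i : Fin (n + 1), 2 / s * B e' (Pi.single i 1) ∈ (algebraMap O K).range := by
  intro i
  set c : K := 2 / s * B e' (Pi.single i 1) with hc
  have hx : ∀ j, (Pi.single i 1 : Fin (n + 1) → K) j ∈ (algebraMap O K).range := by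
    intro j
    rcases eq_or_ne j i with h | h
    · subst h; rw [Pi.single_eq_same]; exact ⟨1, map_one _⟩
    · rw [Pi.single_eq_of_ne h]; exact ⟨0, map_zero _⟩
  have hce : ∀ j, c * e' j ∈ (algebraMap O K).range := by
    intro j
    have h1 := hmap (Pi.single i 1) hx j
    have h2 := hx j
    have heq : c * e' j = (Pi.single i 1 : Fin (n + 1) → K) j -
        ((Pi.single i 1 : Fin (n + 1) → K) - (2 * B e' (Pi.single i 1) / s) • e') j := by
      simp only [Pi.sub_apply, Pi.smul_apply, smul_eq_mul, hc]
      ring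
    rw [heq]
    exact sub_mem h2 h1
  have h1 : (1 : O) ∈ Ideal.span (Set.range e) := by rw [hcop]; trivial
  obtain ⟨a, ha⟩ := (Submodule.mem_span_range_iff_exists_fun O).mp h1
  have key : c = ∑ j, algebraMap O K (a j) * (c * e' j) := by
    have : (1 : K) = ∑ j, algebraMap O K (a j) * e' j := by
      rw [he']
      calc (1 : K) = algebraMap O K (∑ j, a j • e j) := by rw [ha, map_one]
        _ = ∑ j, algebraMap O K (a j) * algebraMap O K (e j) := by
            rw [map_sum]; exact Finset.sum_congr rfl fun j _ => by
              rw [smul_eq_mul, map_mul]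
    calc c = c * 1 := (mul_one c).symm
      _ = c * ∑ j, algebraMap O K (a j) * e' j := by rw [← this]
      _ = ∑ j, algebraMap O K (a j) * (c * e' j) := by
          rw [Finset.mul_sum]; exact Finset.sum_congr rfl fun j _ => by ring
  rw [key]
  exact sum_mem fun j _ => mul_mem ⟨a j, rfl⟩ (hce j)
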